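/- arXiv:1512.05249 — 6 statements merged into one kernel-verified Lean document; each statement's English description precedes it below -/
import Mathlib

section
/- For every real a > −1, all real b and every integer m ≥ 0, and every t > 0, the deformed Jacobi moment satisfies μ_m(t;a,b) = ∫_1^∞ ξ^{−a−b−m−2} (ξ−1)^a e^{−tξ} dξ, equivalently μ_m(t;a,b) = e^{−t/2} ∫_{1/2}^∞ e^{−st} (s−1/2)^a (s+1/2)^{−a−b−m−2} ds; i.e. μ_m(t;a,b) = Γ(a+1) e^{−t/2} t^{(b+m)/2} W_{−(2a+b+m+2)/2, −(b+m+1)/2}(t), with the Whittaker function expressed through its integral representation. -/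
open MeasureTheory Set

/-- The Whittaker function `W_{κ,μ}(x)` given by its integral representation,
valid for `μ - κ + 1/2 > 0` and `x > 0`. -/
noncomputable def whittakerW (κ μ x : ℝ) : ℝ :=
  x ^ (μ + 1/2) / Real.Gamma (μ - κ + 1/2) *
    ∫ s in Ioi (1/2 : ℝ),
      Real.exp (-s * x) * (s + 1/2) ^ (κ + μ - 1/2) * (s - 1/2) ^ (μ - κ - 1/2)

theorem stmt_0 (a b : ℝ) (ha : -1 < a) (m : ℕ) (t : ℝ) (ht : 0 < t) :
    (∫ x in Ioo (0:ℝ) 1, x ^ ((m : ℝ) + b) * (1 - x) ^ a * Real.exp (-t / x)) =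
        (∫ ξ in Ioi (1:ℝ), ξ ^ (-a - b - (m : ℝ) - 2) * (ξ - 1) ^ a * Real.exp (-t * ξ)) ∧
    (∫ x in Ioo (0:ℝ) 1, x ^ ((m : ℝ) + b) * (1 - x) ^ a * Real.exp (-t / x)) =
        Real.exp (-t / 2) *
          ∫ s in Ioi (1/2 : ℝ),
            Real.exp (-s * t) * (s - 1/2) ^ a * (s + 1/2) ^ (-a - b - (m : ℝ) - 2) ∧
    (∫ x in Ioo (0:ℝ) 1, x ^ ((m : ℝ) + b) * (1 - x) ^ a * Real.exp (-t / x)) =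
        Real.Gamma (a + 1) * Real.exp (-t / 2) * t ^ ((b + (m : ℝ)) / 2) *
          whittakerW (-(2 * a + b + (m : ℝ) + 2) / 2) (-(b + (m : ℝ) + 1) / 2) t := by
  -- Step 1: substitution x = ξ⁻¹
  have h1 : (∫ x in Ioo (0:ℝ) 1, x ^ ((m : ℝ) + b) * (1 - x) ^ a * Real.exp (-t / x)) =
      ∫ ξ in Ioi (1:ℝ), ξ ^ (-a - b - (m : ℝ) - 2) * (ξ - 1) ^ a * Real.exp (-t * ξ) := by
    have himg : (fun ξ : ℝ => ξ⁻¹) '' Ioi 1 = Ioo 0 1 := by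
      ext x
      constructor
      · rintro ⟨ξ, hξ, rfl⟩
        exact ⟨inv_pos.2 (lt_trans one_pos hξ), inv_lt_one_of_one_lt₀ hξ⟩
      · rintro ⟨hx0, hx1⟩
        exact ⟨x⁻¹, (one_lt_inv₀ hx0).2 hx1, inv_inv x⟩
    have hderiv : ∀ ξ ∈ Ioi (1:ℝ), HasDerivWithinAt (fun ξ : ℝ => ξ⁻¹)
        (-(ξ ^ 2)⁻¹) (Ioi 1) ξ := fun ξ hξ =>
      (hasDerivAt_inv (ne_of_gt (lt_trans one_pos hξ))).hasDerivWithinAt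
    have hinj : InjOn (fun ξ : ℝ => ξ⁻¹) (Ioi 1) := fun x _ y _ h => inv_injective h
    rw [← himg, integral_image_eq_integral_abs_deriv_smul measurableSet_Ioi hderiv hinj]
    refine setIntegral_congr_fun measurableSet_Ioi fun ξ hξ => ?_
    have hξ1 : (1:ℝ) < ξ := hξ
    have hξ0 : (0:ℝ) < ξ := lt_trans one_pos hξ1
    have h1ξ : (0:ℝ) ≤ ξ - 1 := by linarith
    simp only [smul_eq_mul, abs_neg, abs_inv, sq_abs]
    have e1 : (ξ⁻¹) ^ ((m : ℝ) + b) = ξ ^ (-((m:ℝ) + b)) := by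
      rw [Real.inv_rpow hξ0.le, ← Real.rpow_neg hξ0.le]
    have e2 : (1 - ξ⁻¹ : ℝ) = (ξ - 1) * ξ⁻¹ := by field_simp
    have e3 : ((ξ - 1) * ξ⁻¹) ^ a = (ξ - 1) ^ a * ξ ^ (-a) := by
      rw [Real.mul_rpow h1ξ (inv_nonneg.2 hξ0.le), Real.inv_rpow hξ0.le, ← Real.rpow_neg hξ0.le]
    have e4 : -t / ξ⁻¹ = -t * ξ := by field_simp
    have e5 : ((ξ:ℝ) ^ 2)⁻¹ = ξ ^ (-2:ℝ) := by
      rw [← Real.rpow_natCast ξ 2, ← Real.rpow_neg hξ0.le]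
      norm_num
    rw [abs_of_pos (by positivity : (0:ℝ) < ξ ^ 2)]
    rw [e1, e2, e3, e4, e5]
    rw [show (-a - b - (m:ℝ) - 2) = (-2) + (-((m:ℝ)+b) + -a) by ring,
      Real.rpow_add hξ0, Real.rpow_add hξ0]
    ring
  -- Step 2: substitution ξ = s + 1/2
  have h2 : (∫ ξ in Ioi (1:ℝ), ξ ^ (-a - b - (m : ℝ) - 2) * (ξ - 1) ^ a * Real.exp (-t * ξ)) =
      Real.exp (-t / 2) *
        ∫ s in Ioi (1/2 : ℝ),
          Real.exp (-s * t) * (s - 1/2) ^ a * (s + 1/2) ^ (-a - b - (m : ℝ) - 2) := by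
    have himg : (fun s : ℝ => s + 1/2) '' Ioi (1/2) = Ioi 1 := by
      rw [image_add_const_Ioi]; norm_num
    have hderiv : ∀ s ∈ Ioi (1/2:ℝ), HasDerivWithinAt (fun s : ℝ => s + 1/2)
        (1 : ℝ) (Ioi (1/2)) s := fun s _ =>
      ((hasDerivAt_id s).add_const (1/2)).hasDerivWithinAt
    have hinj : InjOn (fun s : ℝ => s + 1/2) (Ioi (1/2)) :=
      fun x _ y _ h => by linarith [h]
    rw [← himg, integral_image_eq_integral_abs_deriv_smul measurableSet_Ioi hderiv hinj,
      ← integral_const_mul]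
    refine setIntegral_congr_fun measurableSet_Ioi fun s hs => ?_
    simp only [smul_eq_mul, abs_one, one_mul]
    have : -t * (s + 1/2) = -s * t + -t/2 := by ring
    rw [this, Real.exp_add]
    ring_nf
  refine ⟨h1, h1.trans h2, ?_⟩
  rw [h1, h2, whittakerW]
  have hκμ1 : (-(2 * a + b + (m : ℝ) + 2) / 2) + (-(b + (m : ℝ) + 1) / 2) - 1/2
      = -a - b - (m:ℝ) - 2 := by ring
  have hκμ2 : (-(b + (m : ℝ) + 1) / 2) - (-(2 * a + b + (m : ℝ) + 2) / 2) + 1/2 = a + 1 := by ring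
  have hκμ3 : (-(b + (m : ℝ) + 1) / 2) - (-(2 * a + b + (m : ℝ) + 2) / 2) - 1/2 = a := by ring
  have hκμ4 : (-(b + (m : ℝ) + 1) / 2) + 1/2 = -((b + (m:ℝ))/2) := by ring
  rw [hκμ1, hκμ2, hκμ3, hκμ4]
  have hΓ : Real.Gamma (a + 1) ≠ 0 := (Real.Gamma_pos_of_pos (by linarith)).ne'
  have ht1 : t ^ ((b + (m:ℝ))/2) * t ^ (-((b + (m:ℝ))/2)) = 1 := by
    rw [← Real.rpow_add ht]; simp
  have hint : (∫ s in Ioi (1/2 : ℝ),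
        Real.exp (-s * t) * (s - 1/2) ^ a * (s + 1/2) ^ (-a - b - (m : ℝ) - 2))
      = ∫ s in Ioi (1/2 : ℝ),
        Real.exp (-s * t) * (s + 1/2) ^ (-a - b - (m : ℝ) - 2) * (s - 1/2) ^ a := by
    refine setIntegral_congr_fun measurableSet_Ioi fun s _ => by ring
  rw [hint]
  have htp : t ^ ((b + (m:ℝ))/2) ≠ 0 := (Real.rpow_pos_of_pos ht _).ne'
  rw [Real.rpow_neg ht.le]
  field_simp
end

section
/- Let κ, μ be real with μ − κ + 1/2 > 0. Then for every z > 0 the Whittaker function defined by its integral representation is differentiable and satisfies the first-order recurrence z · W_{κ,μ}'(z) = (κ − z/2) W_{κ,μ}(z) − ( μ² − (κ − 1/2)² ) W_{κ−1,μ}(z). -/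
/-!
Write `W_{κ,μ}(z) = z^{μ+1/2} J_{q,p}(z) / Γ(p + 1)` with `q = κ + μ - 1/2`, `p = μ - κ - 1/2` and
`J_{q,p}(z) = ∫_{1/2}^∞ e^{-sz} (s + 1/2)^q (s - 1/2)^p ds`, which converges for `z > 0`, `p > -1`.
Differentiating under the integral sign and splitting `s = (s - 1/2) + 1/2` gives
`J_{q,p}' = -J_{q,p+1} - J_{q,p} / 2`. Integrating the `s`-derivative of
`e^{-sz} (s + 1/2)^q (s - 1/2)^{p+1}`, which vanishes at `s = 1/2` and at infinity, gives the
contiguous relation `(p + 1) J_{q,p} + q J_{q-1,p+1} = z J_{q,p+1}`. Since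
`W_{κ-1,μ}` involves `J_{q-1,p+1}` and `Γ(p + 2) = (p + 1) Γ(p + 1)`, the recurrence is an algebraic
consequence of these two identities.
-/

open MeasureTheory Set

open Filter Topology

noncomputable def whittakerIntegrand (q p z s : ℝ) : ℝ :=
  Real.exp (-s * z) * (s + 1/2) ^ q * (s - 1/2) ^ p

noncomputable def whittakerIntegral (q p z : ℝ) : ℝ :=
  ∫ s in Ioi (1/2 : ℝ), whittakerIntegrand q p z s

lemma rpow_le_two_mul_rpow_abs {t u : ℝ} (q : ℝ) (ht : 1/2 ≤ t) (htu : t ≤ 2 * u) (hu : 1 ≤ u) :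
    t ^ q ≤ (2 * u) ^ |q| := by
  rcases le_or_gt 0 q with hq | hq
  · calc t ^ q ≤ (2 * u) ^ q := Real.rpow_le_rpow (by linarith) htu hq
      _ ≤ (2 * u) ^ |q| := Real.rpow_le_rpow_of_exponent_le (by linarith) (le_abs_self q)
  · calc t ^ q ≤ (1/2) ^ q := Real.rpow_le_rpow_of_nonpos (by norm_num) ht hq.le
      _ = 2 ^ |q| := by
        rw [abs_of_neg hq, one_div, Real.inv_rpow zero_le_two, ← Real.rpow_neg zero_le_two]
      _ ≤ (2 * u) ^ |q| := Real.rpow_le_rpow zero_le_two (by linarith) (abs_nonneg q)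

section whittakerIntegrand

variable {q p z s : ℝ}

lemma whittakerIntegrand_nonneg (hs : 1/2 ≤ s) : 0 ≤ whittakerIntegrand q p z s := by
  unfold whittakerIntegrand
  positivity

lemma add_half_mul_whittakerIntegrand (hs : 1/2 < s) :
    (s + 1/2) * whittakerIntegrand q p z s = whittakerIntegrand (q + 1) p z s := by
  unfold whittakerIntegrand
  rw [Real.rpow_add_one (by linarith) q]
  ring

lemma mul_whittakerIntegrand (hs : 1/2 < s) :
    s * whittakerIntegrand q p z s =
      whittakerIntegrand q (p + 1) z s + whittakerIntegrand q p z s / 2 := by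
  unfold whittakerIntegrand
  rw [Real.rpow_add_one (by linarith) p]
  ring

lemma whittakerIntegrand_half (hp : p ≠ 0) : whittakerIntegrand q p z (1/2) = 0 := by
  simp [whittakerIntegrand, Real.zero_rpow hp]

lemma continuousAt_whittakerIntegrand (hs : 1/2 ≤ s) (hp : 1/2 < s ∨ 0 ≤ p) :
    ContinuousAt (whittakerIntegrand q p z) s := by
  have hplus : ContinuousAt (fun s : ℝ => (s + 1/2) ^ q) s :=
    (continuousAt_id.add continuousAt_const).rpow_const (Or.inl (by linarith : 0 < s + 1/2).ne')
  have hminus : ContinuousAt (fun s : ℝ => (s - 1/2) ^ p) s :=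
    (continuousAt_id.sub continuousAt_const).rpow_const
      (hp.imp_left fun h => (sub_pos.mpr h).ne')
  exact ((Real.continuous_exp.comp (by fun_prop)).continuousAt.mul hplus).mul hminus

lemma continuousOn_whittakerIntegrand :
    ContinuousOn (whittakerIntegrand q p z) (Ioi (1/2)) :=
  fun _ hs => (continuousAt_whittakerIntegrand (le_of_lt hs) (Or.inl hs)).continuousWithinAt

lemma whittakerIntegrand_le_of_one_le (hs : 1 ≤ s) :
    whittakerIntegrand q p z s ≤ 2 ^ (|q| + |p|) * (s ^ (|q| + |p|) * Real.exp (-z * s)) := by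
  have hq := rpow_le_two_mul_rpow_abs q (t := s + 1/2) (by linarith) (by linarith) hs
  have hp := rpow_le_two_mul_rpow_abs p (t := s - 1/2) (by linarith) (by linarith) hs
  calc whittakerIntegrand q p z s
      ≤ Real.exp (-s * z) * (2 * s) ^ |q| * (2 * s) ^ |p| := by
        unfold whittakerIntegrand
        gcongr
        exact Real.rpow_nonneg (by linarith) _
    _ = 2 ^ (|q| + |p|) * (s ^ (|q| + |p|) * Real.exp (-z * s)) := by
        rw [mul_assoc, ← Real.rpow_add (by linarith), Real.mul_rpow zero_le_two (by linarith),
          show -s * z = -z * s by ring]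
        ring

lemma tendsto_whittakerIntegrand_atTop (hz : 0 < z) :
    Tendsto (whittakerIntegrand q p z) atTop (𝓝 0) := by
  have hlim := (tendsto_rpow_mul_exp_neg_mul_atTop_nhds_zero (|q| + |p|) z hz).const_mul
    (2 ^ (|q| + |p|))
  rw [mul_zero] at hlim
  refine squeeze_zero' ?_ ?_ hlim
  · filter_upwards [eventually_ge_atTop (1/2)] with s hs using whittakerIntegrand_nonneg hs
  · filter_upwards [eventually_ge_atTop 1] with s hs using whittakerIntegrand_le_of_one_le hs

lemma hasDerivAt_whittakerIntegrand (hs : 1/2 < s) :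
    HasDerivAt (whittakerIntegrand q p z)
      (-z * whittakerIntegrand q p z s + q * whittakerIntegrand (q - 1) p z s +
        p * whittakerIntegrand q (p - 1) z s) s := by
  have hexp : HasDerivAt (fun s : ℝ => Real.exp (-s * z)) (Real.exp (-s * z) * (-1 * z)) s :=
    ((hasDerivAt_id' s).neg.mul_const z).exp
  have hplus : HasDerivAt (fun s : ℝ => (s + 1/2) ^ q) (1 * q * (s + 1/2) ^ (q - 1)) s :=
    ((hasDerivAt_id' s).add_const _).rpow_const (Or.inl (by linarith))
  have hminus : HasDerivAt (fun s : ℝ => (s - 1/2) ^ p) (1 * p * (s - 1/2) ^ (p - 1)) s :=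
    ((hasDerivAt_id' s).sub_const _).rpow_const (Or.inl (by linarith))
  refine HasDerivAt.congr_deriv (f := whittakerIntegrand q p z) ((hexp.mul hplus).mul hminus) ?_
  simp only [whittakerIntegrand, Pi.mul_apply]
  ring

lemma integrableOn_whittakerIntegrand (q : ℝ) (hz : 0 < z) (hp : -1 < p) :
    IntegrableOn (whittakerIntegrand q p z) (Ioi (1/2)) := by
  rw [← Ioc_union_Ioi_eq_Ioi (by norm_num : (1/2 : ℝ) ≤ 1)]
  refine IntegrableOn.union ?_ ?_
  · have hsing : IntegrableOn (fun s : ℝ => 2 ^ |q| * (s - 1/2) ^ p) (Ioc (1/2) 1) := by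
      refine Integrable.const_mul ?_ _
      have h := (intervalIntegral.intervalIntegrable_rpow' hp (a := 0) (b := 1/2)).comp_sub_right
        (1/2)
      norm_num at h
      exact (intervalIntegrable_iff_integrableOn_Ioc_of_le (by norm_num)).mp h
    refine hsing.mono' (continuousOn_whittakerIntegrand.mono Ioc_subset_Ioi_self
      |>.aestronglyMeasurable measurableSet_Ioc) ?_
    refine (ae_restrict_iff' measurableSet_Ioc).mpr (Eventually.of_forall fun s hs => ?_)
    rw [Real.norm_of_nonneg (whittakerIntegrand_nonneg hs.1.le)]
    have hq := rpow_le_two_mul_rpow_abs q (t := s + 1/2) (u := 1) (by linarith [hs.1])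
      (by linarith [hs.2]) le_rfl
    have hexp : Real.exp (-s * z) ≤ 1 := Real.exp_le_one_iff.mpr (by nlinarith [hs.1])
    have : 0 ≤ s - 1/2 := by linarith [hs.1]
    calc whittakerIntegrand q p z s ≤ 1 * (2 * 1) ^ |q| * (s - 1/2) ^ p := by
          unfold whittakerIntegrand
          gcongr
          exact Real.rpow_nonneg (by linarith) _
      _ = 2 ^ |q| * (s - 1/2) ^ p := by norm_num
  · have htail : IntegrableOn
        (fun s : ℝ => 2 ^ (|q| + |p|) * (s ^ (|q| + |p|) * Real.exp (-z * s))) (Ioi 1) := by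
      refine Integrable.const_mul ?_ _
      have h := integrableOn_rpow_mul_exp_neg_mul_rpow
        (by linarith [abs_nonneg q, abs_nonneg p] : -1 < |q| + |p|) zero_lt_one hz
      simp only [Real.rpow_one] at h
      exact h.mono_set (Ioi_subset_Ioi zero_le_one)
    refine htail.mono' (continuousOn_whittakerIntegrand.mono (Ioi_subset_Ioi (by norm_num))
      |>.aestronglyMeasurable measurableSet_Ioi) ?_
    refine (ae_restrict_iff' measurableSet_Ioi).mpr (Eventually.of_forall fun s hs => ?_)
    rw [Real.norm_of_nonneg (whittakerIntegrand_nonneg (by linarith [mem_Ioi.mp hs]))]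
    exact whittakerIntegrand_le_of_one_le (le_of_lt hs)

lemma mul_whittakerIntegrand_le {x y : ℝ} (hs : 1/2 < s) (hyx : y ≤ x) :
    s * whittakerIntegrand q p x s ≤ whittakerIntegrand (q + 1) p y s := by
  rw [← add_half_mul_whittakerIntegrand hs]
  have hplus : 0 ≤ (s + 1/2) ^ q := Real.rpow_nonneg (by linarith) _
  have hminus : 0 ≤ (s - 1/2) ^ p := Real.rpow_nonneg (by linarith) _
  unfold whittakerIntegrand
  gcongr ?_ * (?_ * _ * _)
  · linarith
  · exact Real.exp_le_exp.mpr (by nlinarith)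

lemma hasDerivAt_whittakerIntegrand_param (q p s x : ℝ) :
    HasDerivAt (fun x => whittakerIntegrand q p x s) (-s * whittakerIntegrand q p x s) x := by
  have hexp : HasDerivAt (fun x : ℝ => Real.exp (-s * x)) (Real.exp (-s * x) * (-s)) x := by
    simpa using ((hasDerivAt_id' x).const_mul (-s)).exp
  refine ((hexp.mul_const _).mul_const _).congr_deriv ?_
  simp only [whittakerIntegrand]
  ring

end whittakerIntegrand

section whittakerIntegral

variable {q p z : ℝ}

lemma hasDerivAt_whittakerIntegral (hp : -1 < p) (hz : 0 < z) :
    HasDerivAt (whittakerIntegral q p)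
      (-whittakerIntegral q (p + 1) z - whittakerIntegral q p z / 2) z := by
  have hbound : ∀ᵐ s ∂volume.restrict (Ioi (1/2)), ∀ x ∈ Metric.ball z (z/2),
      ‖-s * whittakerIntegrand q p x s‖ ≤ whittakerIntegrand (q + 1) p (z/2) s := by
    refine (ae_restrict_iff' measurableSet_Ioi).mpr (Eventually.of_forall fun s hs x hx => ?_)
    have hs : 1/2 < s := hs
    have hx : z/2 ≤ x := by linarith [(abs_lt.mp (mem_ball_iff_norm.mp hx)).1]
    rw [norm_mul, norm_neg, Real.norm_of_nonneg (by linarith),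
      Real.norm_of_nonneg (whittakerIntegrand_nonneg hs.le)]
    exact mul_whittakerIntegrand_le hs hx
  have hderiv := (hasDerivAt_integral_of_dominated_loc_of_deriv_le
    (F := fun x s => whittakerIntegrand q p x s)
    (Metric.ball_mem_nhds z (half_pos hz))
    (Eventually.of_forall fun _ =>
      continuousOn_whittakerIntegrand.aestronglyMeasurable measurableSet_Ioi)
    (integrableOn_whittakerIntegrand q hz hp)
    ((continuousOn_id.neg.mul continuousOn_whittakerIntegrand).aestronglyMeasurable
      measurableSet_Ioi)
    hbound (integrableOn_whittakerIntegrand (q + 1) (half_pos hz) hp)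
    (Eventually.of_forall fun s x _ => hasDerivAt_whittakerIntegrand_param q p s x)).2
  have hshift : IntegrableOn (fun s => -whittakerIntegrand q (p + 1) z s) (Ioi (1/2)) :=
    (integrableOn_whittakerIntegrand q hz (show -1 < p + 1 by linarith)).neg
  have hsame : IntegrableOn (fun s => whittakerIntegrand q p z s / 2) (Ioi (1/2)) :=
    (integrableOn_whittakerIntegrand q hz hp).div_const 2
  refine HasDerivAt.congr_deriv (f := whittakerIntegral q p) hderiv ?_
  simp only [whittakerIntegral]
  rw [← integral_div, ← integral_neg, ← integral_sub hshift hsame]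
  refine setIntegral_congr_fun measurableSet_Ioi fun s hs => ?_
  simp only [neg_mul, mul_whittakerIntegrand (mem_Ioi.mp hs)]
  ring

lemma whittakerIntegral_contiguous (hp : -1 < p) (hz : 0 < z) :
    (p + 1) * whittakerIntegral q p z + q * whittakerIntegral (q - 1) (p + 1) z =
      z * whittakerIntegral q (p + 1) z := by
  have hp1 : 0 < p + 1 := by linarith
  have hcont : ContinuousWithinAt (whittakerIntegrand q (p + 1) z) (Ici (1/2)) (1/2) :=
    (continuousAt_whittakerIntegrand le_rfl (Or.inr hp1.le)).continuousWithinAt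
  have hderiv : ∀ s ∈ Ioi (1/2 : ℝ), HasDerivAt (whittakerIntegrand q (p + 1) z)
      (-z * whittakerIntegrand q (p + 1) z s + q * whittakerIntegrand (q - 1) (p + 1) z s +
        (p + 1) * whittakerIntegrand q p z s) s := fun s hs => by
    simpa using hasDerivAt_whittakerIntegrand (q := q) (p := p + 1) (z := z) hs
  have hint₁ := (integrableOn_whittakerIntegrand q hz (by linarith : -1 < p + 1)).const_mul (-z)
  have hint₂ := (integrableOn_whittakerIntegrand (q - 1) hz (by linarith : -1 < p + 1)).const_mul q
  have hint₃ := (integrableOn_whittakerIntegrand q hz hp).const_mul (p + 1)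
  have hint₁₂ : IntegrableOn (fun s => -z * whittakerIntegrand q (p + 1) z s +
      q * whittakerIntegrand (q - 1) (p + 1) z s) (Ioi (1/2)) := hint₁.add hint₂
  have hftc := integral_Ioi_of_hasDerivAt_of_tendsto hcont hderiv
    (hint₁₂.add hint₃) (tendsto_whittakerIntegrand_atTop hz)
  rw [integral_add hint₁₂ hint₃, integral_add hint₁ hint₂, integral_const_mul,
    integral_const_mul, integral_const_mul, whittakerIntegrand_half hp1.ne'] at hftc
  simp only [whittakerIntegral]
  linarith

end whittakerIntegral

lemma whittakerW_eq (κ μ : ℝ) :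
    whittakerW κ μ = fun x => x ^ (μ + 1/2) / Real.Gamma (μ - κ + 1/2) *
      whittakerIntegral (κ + μ - 1/2) (μ - κ - 1/2) x := rfl

lemma mul_whittakerW_sub_one {κ μ : ℝ} (x : ℝ) (h : μ - κ + 1/2 ≠ 0) :
    (μ - κ + 1/2) * whittakerW (κ - 1) μ x = x ^ (μ + 1/2) / Real.Gamma (μ - κ + 1/2) *
      whittakerIntegral (κ + μ - 1/2 - 1) (μ - κ - 1/2 + 1) x := by
  have hΓ : Real.Gamma (μ - (κ - 1) + 1/2) = (μ - κ + 1/2) * Real.Gamma (μ - κ + 1/2) := by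
    rw [← Real.Gamma_add_one h]; ring_nf
  rw [whittakerW_eq]
  dsimp only
  rw [hΓ, show κ - 1 + μ - 1/2 = κ + μ - 1/2 - 1 by ring,
    show μ - (κ - 1) - 1/2 = μ - κ - 1/2 + 1 by ring, ← mul_assoc, ← mul_div_assoc,
    mul_div_mul_left _ _ h]

lemma hasDerivAt_whittakerW {κ μ z : ℝ} (h : 0 < μ - κ + 1/2) (hz : 0 < z) :
    HasDerivAt (whittakerW κ μ)
      ((μ + 1/2) * z ^ (μ + 1/2 - 1) / Real.Gamma (μ - κ + 1/2) *
          whittakerIntegral (κ + μ - 1/2) (μ - κ - 1/2) z -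
        z ^ (μ + 1/2) / Real.Gamma (μ - κ + 1/2) *
          (whittakerIntegral (κ + μ - 1/2) (μ - κ - 1/2 + 1) z +
            whittakerIntegral (κ + μ - 1/2) (μ - κ - 1/2) z / 2)) z := by
  have hpow : HasDerivAt (fun x => x ^ (μ + 1/2)) ((μ + 1/2) * z ^ (μ + 1/2 - 1)) z :=
    Real.hasDerivAt_rpow_const (Or.inl hz.ne')
  rw [whittakerW_eq]
  refine ((hpow.div_const (Real.Gamma (μ - κ + 1/2))).mul (hasDerivAt_whittakerIntegral
    (q := κ + μ - 1/2) (p := μ - κ - 1/2) (by linarith) hz)).congr_deriv ?_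
  ring

/-- The first-order recurrence relation
`z W_{κ,μ}'(z) = (κ - z/2) W_{κ,μ}(z) - (μ² - (κ-1/2)²) W_{κ-1,μ}(z)`. -/
theorem stmt_7 (κ μ : ℝ) (h : μ - κ + 1/2 > 0) :
    ∀ z > (0:ℝ), DifferentiableAt ℝ (whittakerW κ μ) z ∧
      z * deriv (whittakerW κ μ) z =
        (κ - z / 2) * whittakerW κ μ z -
          (μ ^ 2 - (κ - 1/2) ^ 2) * whittakerW (κ - 1) μ z := by
  intro z hz
  have hW := hasDerivAt_whittakerW h hz
  refine ⟨hW.differentiableAt, ?_⟩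
  have hzpow : z * z ^ (μ + 1/2 - 1) = z ^ (μ + 1/2) := by
    rw [mul_comm, ← Real.rpow_add_one hz.ne', sub_add_cancel]
  have hcontig :=
    whittakerIntegral_contiguous (q := κ + μ - 1/2) (p := μ - κ - 1/2) (by linarith) hz
  have hshift := mul_whittakerW_sub_one z h.ne'
  rw [hW.deriv, whittakerW_eq]
  linear_combination
    (μ + 1/2) * whittakerIntegral (κ + μ - 1/2) (μ - κ - 1/2) z / Real.Gamma (μ - κ + 1/2) * hzpow
      + z ^ (μ + 1/2) / Real.Gamma (μ - κ + 1/2) * hcontig + (κ + μ - 1/2) * hshift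
end

section
/- Let κ, μ be real with μ − κ + 1/2 > 0. Then the function y(x) = W_{κ,μ}(x), defined by the integral representation, is twice differentiable on (0,∞) and satisfies Whittaker's differential equation y''(x) + ( −1/4 + κ/x + (1/4 − μ²)/x² ) y(x) = 0 for all x > 0. -/
open MeasureTheory Set

/-!
With `p = κ + μ - 1/2` and `q = μ - κ - 1/2`, write `W = Γ(μ - κ + 1/2)⁻¹ x^(μ+1/2) M₀` where
`Mₙ(x) = ∫_{1/2}^∞ sⁿ e^(-sx) (s + 1/2)^p (s - 1/2)^q ds`. Differentiating under the integral
sign gives `Mₙ' = -Mₙ₊₁`, so `W''` is a combination of `M₀, M₁, M₂`. Integrating the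
`s`-derivative of `e^(-sx) (s + 1/2)^(p+1) (s - 1/2)^(q+1)`, which vanishes at `s = 1/2` (as
`q + 1 > 0`) and at `∞`, gives `(p + q + 2) M₁ + ((q - p)/2 + x/4) M₀ - x M₂ = 0`; since
`p + q + 2 = 2μ + 1`, `(q - p)/2 = -κ` and `(μ + 1/2)(μ - 1/2) = μ² - 1/4`, this recurrence is
exactly Whittaker's equation.
-/

open Real Filter Asymptotics
open scoped Topology

namespace Whittaker

noncomputable def kernel (p q x s : ℝ) : ℝ :=
  exp (-s * x) * (s + 1/2) ^ p * (s - 1/2) ^ q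

noncomputable def moment (p q : ℝ) (n : ℕ) (x : ℝ) : ℝ :=
  ∫ s in Ioi (1/2), s ^ n * kernel p q x s

variable {p q x : ℝ}

lemma continuousAt_kernel {s : ℝ} (hs : -1/2 < s) (hq : s - 1/2 ≠ 0 ∨ 0 ≤ q) :
    ContinuousAt (kernel p q x) s := by
  have hplus : s + 1/2 ≠ 0 := by linarith
  exact ((continuous_exp.comp (continuous_neg.mul continuous_const)).continuousAt.mul
    ((continuous_add_const _).continuousAt.rpow_const (Or.inl hplus))).mul
    ((continuous_sub_right _).continuousAt.rpow_const hq)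

lemma continuousOn_kernel (p q x : ℝ) : ContinuousOn (kernel p q x) (Ioi (1/2)) :=
  fun s (hs : 1/2 < s) =>
    (continuousAt_kernel (by linarith) (Or.inl (by linarith))).continuousWithinAt

lemma isTheta_add_const_rpow (c r : ℝ) :
    (fun s : ℝ => (s + c) ^ r) =Θ[atTop] fun s => s ^ r := by
  have h : (fun s : ℝ => s + c) ~[atTop] id :=
    (IsEquivalent.refl (u := id)).add_isLittleO (isLittleO_const_id_atTop c)
  exact h.isTheta.rpow (eventually_ge_atTop (-c) |>.mono fun s hs => by simp; linarith)
    (eventually_ge_atTop 0)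

lemma isBigO_pow_mul_kernel (n : ℕ) (p q : ℝ) (hx : 0 < x) :
    (fun s => s ^ n * kernel p q x s) =O[atTop] fun s => exp (-(x/2) * s) := by
  have hpoly : (fun s : ℝ => s ^ n * ((s + 1/2) ^ p * (s - 1/2) ^ q))
      =O[atTop] fun s => s ^ ((n : ℝ) + p + q) := by
    have hq : (fun s : ℝ => (s - 1/2) ^ q) =O[atTop] fun s => s ^ q := by
      simpa only [← sub_eq_add_neg] using (isTheta_add_const_rpow (-(1/2)) q).isBigO
    refine ((isBigO_refl _ _).mul ((isTheta_add_const_rpow _ p).isBigO.mul hq)).congr' .rfl ?_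
    filter_upwards [eventually_gt_atTop 0] with s hs
    rw [rpow_add hs, rpow_add hs, rpow_natCast, mul_assoc]
  have := (hpoly.trans_isLittleO (isLittleO_rpow_exp_pos_mul_atTop _ (half_pos hx))).isBigO
  refine ((isBigO_refl (fun s => exp (-s * x)) atTop).mul this).congr (fun s => ?_) (fun s => ?_)
  · simp only [kernel]; ring
  · rw [← exp_add]; ring_nf

lemma integrableOn_sub_rpow_Icc (hq : -1 < q) :
    IntegrableOn (fun s : ℝ => (s - 1/2) ^ q) (Icc (1/2) 1) := by
  have h := (intervalIntegral.intervalIntegrable_rpow' hq (a := 0) (b := 1/2)).comp_sub_right (1/2)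
  norm_num at h
  exact (intervalIntegrable_iff_integrableOn_Icc_of_le (by norm_num)).mp h

lemma integrableOn_pow_mul_kernel (n : ℕ) (p : ℝ) (hq : -1 < q) (hx : 0 < x) :
    IntegrableOn (fun s => s ^ n * kernel p q x s) (Ioi (1/2)) := by
  have hcont : ContinuousOn (fun s => s ^ n * kernel p q x s) (Ioi (1/2)) :=
    (continuous_pow n).continuousOn.mul (continuousOn_kernel p q x)
  have hnear : IntegrableOn (fun s => s ^ n * kernel p q x s) (Icc (1/2) 1) := by
    have hsmooth : ContinuousOn (fun s : ℝ => s ^ n * exp (-s * x) * (s + 1/2) ^ p) (Icc (1/2) 1) :=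
      fun s hs => ContinuousAt.continuousWithinAt <| by
        have : s + 1/2 ≠ 0 := by linarith [hs.1]
        exact (by fun_prop : Continuous fun s : ℝ => s ^ n * exp (-s * x)).continuousAt.mul
          ((continuous_add_const _).continuousAt.rpow_const (Or.inl this))
    refine ((integrableOn_sub_rpow_Icc hq).mul_continuousOn hsmooth isCompact_Icc).congr_fun
      (fun s _ => by simp only [kernel]; ring) measurableSet_Icc
  have htail : IntegrableOn (fun s => s ^ n * kernel p q x s) (Ioi 1) :=
    integrable_of_isBigO_exp_neg (half_pos hx)
      (hcont.mono fun s (hs : 1 ≤ s) => show 1/2 < s by linarith)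
      (isBigO_pow_mul_kernel n p q hx)
  exact (hnear.union htail).mono_set fun s (hs : 1/2 < s) => by
    rcases le_or_gt s 1 with h | h
    exacts [Or.inl ⟨hs.le, h⟩, Or.inr h]

lemma hasDerivAt_kernel_wrt_x (p q x s : ℝ) :
    HasDerivAt (fun y => kernel p q y s) (-s * kernel p q x s) x := by
  have h := (((hasDerivAt_id' x).const_mul (-s)).exp.mul_const ((s + 1/2) ^ p)).mul_const
    ((s - 1/2) ^ q)
  exact h.congr_deriv (by simp only [kernel]; ring)

lemma kernel_nonneg {s : ℝ} (hs : 1/2 < s) : 0 ≤ kernel p q x s := by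
  have : 0 < s - 1/2 := by linarith
  unfold kernel
  positivity

lemma kernel_le_kernel_of_le {y s : ℝ} (hs : 1/2 < s) (hxy : x ≤ y) :
    kernel p q y s ≤ kernel p q x s := by
  have : 0 < s - 1/2 := by linarith
  simp only [kernel, mul_assoc]
  exact mul_le_mul_of_nonneg_right (exp_le_exp.mpr (by nlinarith)) (by positivity)

lemma hasDerivAt_moment (p : ℝ) (hq : -1 < q) (n : ℕ) (hx : 0 < x) :
    HasDerivAt (moment p q n) (-moment p q (n + 1) x) x := by
  have hmeas (m : ℕ) (y : ℝ) : AEStronglyMeasurable (fun s => s ^ m * kernel p q y s)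
      (volume.restrict (Ioi (1/2))) :=
    ((continuous_pow m).continuousOn.mul (continuousOn_kernel p q y)).aestronglyMeasurable
      measurableSet_Ioi
  have hball : ∀ y ∈ Metric.ball x (x/2), x/2 ≤ y := fun y hy => by
    linarith [(abs_lt.mp (Real.dist_eq y x ▸ Metric.mem_ball.mp hy)).1]
  have hbound : ∀ᵐ s ∂volume.restrict (Ioi (1/2)), ∀ y ∈ Metric.ball x (x/2),
      ‖-(s ^ (n + 1) * kernel p q y s)‖ ≤ s ^ (n + 1) * kernel p q (x/2) s := by
    rw [ae_restrict_iff' measurableSet_Ioi]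
    refine .of_forall fun s (hs : 1/2 < s) y hy => ?_
    rw [norm_neg, Real.norm_of_nonneg (mul_nonneg (by positivity) (kernel_nonneg hs))]
    exact mul_le_mul_of_nonneg_left (kernel_le_kernel_of_le hs (hball y hy)) (by positivity)
  have hderiv : ∀ᵐ s ∂volume.restrict (Ioi (1/2)), ∀ y ∈ Metric.ball x (x/2),
      HasDerivAt (fun y => s ^ n * kernel p q y s) (-(s ^ (n + 1) * kernel p q y s)) y :=
    .of_forall fun s y _ => ((hasDerivAt_kernel_wrt_x p q y s).const_mul (s ^ n)).congr_deriv
      (by ring)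
  have h := (hasDerivAt_integral_of_dominated_loc_of_deriv_le
    (Metric.ball_mem_nhds x (half_pos hx)) (.of_forall (hmeas n))
    (integrableOn_pow_mul_kernel n p hq hx) (hmeas (n + 1) x).neg hbound
    (integrableOn_pow_mul_kernel (n + 1) p hq (half_pos hx)) hderiv).2
  rw [integral_neg] at h
  exact h

lemma hasDerivAt_kernel_add_one {s : ℝ} (hs : 1/2 < s) :
    HasDerivAt (kernel (p + 1) (q + 1) x)
      (((p + q + 2) * s + (q - p)/2 - x * (s ^ 2 - 1/4)) * kernel p q x s) s := by
  have hplus : 0 < s + 1/2 := by linarith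
  have hminus : 0 < s - 1/2 := by linarith
  have hA := ((hasDerivAt_id' s).add_const (1/2)).rpow_const (p := p + 1) (Or.inl hplus.ne')
  have hB := ((hasDerivAt_id' s).sub_const (1/2)).rpow_const (p := q + 1) (Or.inl hminus.ne')
  have hE : HasDerivAt (fun y => exp (-y * x)) (exp (-s * x) * (-1 * x)) s :=
    ((hasDerivAt_neg s).mul_const x).exp
  refine ((hE.mul hA).mul hB).congr_deriv ?_
  simp only [kernel, add_sub_cancel_right, rpow_add hplus, rpow_add hminus, rpow_one, Pi.mul_apply]
  ring

lemma tendsto_kernel_atTop (p q : ℝ) (hx : 0 < x) : Tendsto (kernel p q x) atTop (𝓝 0) := by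
  have hexp : Tendsto (fun s => exp (-(x/2) * s)) atTop (𝓝 0) := by
    refine (tendsto_exp_neg_atTop_nhds_zero.comp (tendsto_id.const_mul_atTop (half_pos hx))).congr
      fun s => ?_
    simp only [Function.comp, id, neg_mul]
  simpa only [pow_zero, one_mul] using (isBigO_pow_mul_kernel 0 p q hx).trans_tendsto hexp

lemma moment_recurrence (p : ℝ) (hq : -1 < q) (hx : 0 < x) :
    (p + q + 2) * moment p q 1 x + ((q - p)/2 + x/4) * moment p q 0 x - x * moment p q 2 x
      = 0 := by
  have hI (m : ℕ) := integrableOn_pow_mul_kernel m p hq hx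
  have hcont : ContinuousWithinAt (kernel (p + 1) (q + 1) x) (Ici (1/2)) (1/2) :=
    (continuousAt_kernel (by norm_num) (Or.inr (by linarith))).continuousWithinAt
  have hF0 : kernel (p + 1) (q + 1) x (1/2) = 0 := by
    simp [kernel, zero_rpow (by linarith : q + 1 ≠ 0)]
  have hf' : (fun s => ((p + q + 2) * s + (q - p)/2 - x * (s ^ 2 - 1/4)) * kernel p q x s)
      = fun s => (p + q + 2) * (s ^ 1 * kernel p q x s)
        + ((q - p)/2 + x/4) * (s ^ 0 * kernel p q x s) - x * (s ^ 2 * kernel p q x s) := by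
    ext s; ring
  have hint : IntegrableOn (fun s => (p + q + 2) * (s ^ 1 * kernel p q x s)
      + ((q - p)/2 + x/4) * (s ^ 0 * kernel p q x s) - x * (s ^ 2 * kernel p q x s)) (Ioi (1/2)) :=
    (((hI 1).const_mul _).add ((hI 0).const_mul _)).sub ((hI 2).const_mul _)
  have h := integral_Ioi_of_hasDerivAt_of_tendsto hcont (fun s hs => hasDerivAt_kernel_add_one hs)
    (hf' ▸ hint) (tendsto_kernel_atTop (p + 1) (q + 1) hx)
  rw [hf', integral_sub, integral_add, integral_const_mul, integral_const_mul, integral_const_mul,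
    hF0, sub_zero] at h
  · exact h
  · exact (hI 1).const_mul _
  · exact (hI 0).const_mul _
  · exact ((hI 1).const_mul _).add ((hI 0).const_mul _)
  · exact (hI 2).const_mul _

lemma hasDerivAt_rpow_mul_moment (b p : ℝ) (hq : -1 < q) (n : ℕ) (hx : 0 < x) :
    HasDerivAt (fun y => y ^ b * moment p q n y)
      (b * x ^ (b - 1) * moment p q n x - x ^ b * moment p q (n + 1) x) x :=
  ((hasDerivAt_rpow_const (Or.inl hx.ne')).mul (hasDerivAt_moment p hq n hx)).congr_deriv
    (by ring)

lemma hasDerivAt_deriv_rpow_mul_moment (a c p : ℝ) (hq : -1 < q) (hx : 0 < x) :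
    HasDerivAt (deriv fun y => c * (y ^ a * moment p q 0 y))
      (c * x ^ a * (a * (a - 1) / x ^ 2 * moment p q 0 x - 2 * a / x * moment p q 1 x
        + moment p q 2 x)) x := by
  have hderiv : (deriv fun y => c * (y ^ a * moment p q 0 y)) =ᶠ[𝓝 x]
      fun y => c * (a * (y ^ (a - 1) * moment p q 0 y) - y ^ a * moment p q 1 y) := by
    filter_upwards [Ioi_mem_nhds hx] with y (hy : 0 < y)
    exact (((hasDerivAt_rpow_mul_moment a p hq 0 hy).const_mul c).congr_deriv (by ring)).deriv
  refine HasDerivAt.congr_of_eventuallyEq ?_ hderiv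
  refine ((((hasDerivAt_rpow_mul_moment (a - 1) p hq 0 hx).const_mul a).sub
    (hasDerivAt_rpow_mul_moment a p hq 1 hx)).const_mul c).congr_deriv ?_
  have h₁ : x ^ (a - 1) = x ^ a / x := by rw [rpow_sub_one hx.ne']
  have h₂ : x ^ (a - 1 - 1) = x ^ a / x ^ 2 := by rw [rpow_sub_one hx.ne', h₁]; ring
  rw [h₁, h₂]
  field_simp
  ring

lemma whittakerW_eq_moment (κ μ : ℝ) : whittakerW κ μ = fun x =>
    (Gamma (μ - κ + 1/2))⁻¹ * (x ^ (μ + 1/2) * moment (κ + μ - 1/2) (μ - κ - 1/2) 0 x) := by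
  ext x
  simp only [whittakerW, moment, kernel, pow_zero, one_mul]
  ring

end Whittaker

open Whittaker

/-- `W_{κ,μ}` is twice differentiable on `(0,∞)` and satisfies Whittaker's
differential equation `y'' + (-1/4 + κ/x + (1/4 - μ²)/x²) y = 0`. -/
theorem stmt_8 (κ μ : ℝ) (h : μ - κ + 1/2 > 0) :
    (∀ x > (0:ℝ), DifferentiableAt ℝ (whittakerW κ μ) x) ∧
    (∀ x > (0:ℝ), DifferentiableAt ℝ (deriv (whittakerW κ μ)) x) ∧
    ∀ x > (0:ℝ),
      deriv (deriv (whittakerW κ μ)) x +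
        (-(1/4) + κ / x + (1/4 - μ ^ 2) / x ^ 2) * whittakerW κ μ x = 0 := by
  have hq : -1 < μ - κ - 1/2 := by linarith
  have hW := whittakerW_eq_moment κ μ
  refine ⟨fun x hx => ?_, fun x hx => ?_, fun x hx => ?_⟩
  · rw [hW]
    exact ((hasDerivAt_rpow_mul_moment _ _ hq 0 hx).const_mul _).differentiableAt
  · rw [hW]
    exact (hasDerivAt_deriv_rpow_mul_moment _ _ _ hq hx).differentiableAt
  · have hrec := moment_recurrence (κ + μ - 1/2) hq hx
    have hinv : x * x⁻¹ = 1 := mul_inv_cancel₀ hx.ne'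
    rw [hW, (hasDerivAt_deriv_rpow_mul_moment _ _ _ hq hx).deriv]
    set c := (Gamma (μ - κ + 1/2))⁻¹
    set M := moment (κ + μ - 1/2) (μ - κ - 1/2)
    linear_combination (-(c * x ^ (μ + 1/2) / x)) * hrec
      - c * x ^ (μ + 1/2) * (M 2 x - M 0 x / 4) * hinv
end

section
/- Let a be real with |a| < 1/2. For every f ∈ L²((0,∞)) and every x > 0 the integral (R_a f)(x) = ∫_0^∞ (y/x)^a · e^{−(x+y)/2}/(x+y) · f(y) dy converges absolutely, the resulting function R_a f belongs to L²((0,∞)), and ‖R_a f‖_{L²} ≤ (π/cos(πa)) ‖f‖_{L²}; in particular R_a defines a bounded linear operator on L²((0,∞)). -/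
/-!
Schur test with the weight `p(y) = y^{-1/2}`. For `x, y > 0` the kernel is dominated by
`(y/x)^a / (x + y)`, which is homogeneous of degree `-1`; after the substitution `y = x t` both
Schur integrals become `∫₀^∞ t^{s-1} / (1 + t) dt = B(s, 1 - s) = π / sin (π s)` with
`s = 1/2 ± a`, i.e. `π / cos (π a)`. Absolute convergence at every `x > 0` is Cauchy–Schwarz:
the factor `e^{-y/2}` and `a > -1/2` put `y ↦ R_a(x, y)` in `L²(0, ∞)`.
-/

open MeasureTheory Set Real
open scoped ENNReal

section SchurTest

variable {α : Type*} [MeasurableSpace α] {μ : Measure α}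

theorem sq_lintegral_mul_le_of_weight {k g p : α → ℝ≥0∞} (hk : AEMeasurable k μ)
    (hg : AEMeasurable g μ) (hp : AEMeasurable p μ) (hp0 : ∀ᵐ y ∂μ, p y ≠ 0)
    (hpt : ∀ᵐ y ∂μ, p y ≠ ∞) :
    (∫⁻ y, k y * g y ∂μ) ^ 2 ≤
      (∫⁻ y, k y * p y ∂μ) * ∫⁻ y, k y * (p y)⁻¹ * g y ^ 2 ∂μ := by
  -- Hölder for `k g = √(k p) · √(k p⁻¹ g²)`.
  set u : α → ℝ≥0∞ := fun y => (k y * p y) ^ (2⁻¹ : ℝ)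
  set v : α → ℝ≥0∞ := fun y => (k y * (p y)⁻¹ * g y ^ 2) ^ (2⁻¹ : ℝ)
  have hsq : ∀ z : ℝ≥0∞, (z ^ (2⁻¹ : ℝ)) ^ (2 : ℝ) = z := fun z => by
    rw [← ENNReal.rpow_mul]; norm_num
  have huv : ∀ᵐ y ∂μ, k y * g y = u y * v y := by
    filter_upwards [hp0, hpt] with y hy0 hyt
    rw [← ENNReal.mul_rpow_of_nonneg _ _ (by norm_num),
      show k y * p y * (k y * (p y)⁻¹ * g y ^ 2) = (k y * g y) ^ 2 * (p y * (p y)⁻¹) by ring,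
      ENNReal.mul_inv_cancel hy0 hyt, mul_one, ← ENNReal.rpow_natCast, ← ENNReal.rpow_mul]
    norm_num
  have holder := ENNReal.lintegral_mul_le_Lp_mul_Lq μ Real.HolderConjugate.two_two (f := u)
    (g := v) ((hk.mul hp).pow_const _) (((hk.mul hp.inv).mul (hg.pow_const 2)).pow_const _)
  simp only [u, v, Pi.mul_apply, hsq] at holder
  calc (∫⁻ y, k y * g y ∂μ) ^ 2 = (∫⁻ y, u y * v y ∂μ) ^ (2 : ℝ) := by
        rw [lintegral_congr_ae huv, ENNReal.rpow_two]
    _ ≤ _ := ENNReal.rpow_le_rpow holder (by norm_num)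
    _ = _ := by
        rw [ENNReal.mul_rpow_of_nonneg _ _ (by norm_num), ← ENNReal.rpow_mul, ← ENNReal.rpow_mul]
        norm_num

theorem lintegral_sq_lintegral_mul_le_of_schur [SFinite μ] {K : α → α → ℝ≥0∞}
    (hK : Measurable (Function.uncurry K)) {p g : α → ℝ≥0∞} (hp : Measurable p)
    (hg : AEMeasurable g μ) (hp0 : ∀ᵐ y ∂μ, p y ≠ 0) (hpt : ∀ᵐ y ∂μ, p y ≠ ∞) {C : ℝ≥0∞}
    (hrow : ∀ᵐ x ∂μ, ∫⁻ y, K x y * p y ∂μ ≤ C * p x)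
    (hcol : ∀ᵐ y ∂μ, ∫⁻ x, K x y * p x ∂μ ≤ C * p y) :
    ∫⁻ x, (∫⁻ y, K x y * g y ∂μ) ^ 2 ∂μ ≤ C ^ 2 * ∫⁻ y, g y ^ 2 ∂μ := by
  set h : α → ℝ≥0∞ := fun y => (p y)⁻¹ * g y ^ 2
  have hh : AEMeasurable h μ := hp.inv.aemeasurable.mul (hg.pow_const 2)
  have hKx : ∀ x, Measurable (K x) := fun x => hK.comp measurable_prodMk_left
  have hKy : ∀ y, Measurable (K · y) := fun y => hK.comp measurable_prodMk_right
  calc ∫⁻ x, (∫⁻ y, K x y * g y ∂μ) ^ 2 ∂μ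
      ≤ ∫⁻ x, ∫⁻ y, C * (K x y * p x * h y) ∂μ ∂μ := by
        refine lintegral_mono_ae ?_
        filter_upwards [hrow] with x hx
        calc (∫⁻ y, K x y * g y ∂μ) ^ 2
            ≤ (∫⁻ y, K x y * p y ∂μ) * ∫⁻ y, K x y * h y ∂μ := by
              simpa only [h, mul_assoc] using
                sq_lintegral_mul_le_of_weight (hKx x).aemeasurable hg hp.aemeasurable hp0 hpt
          _ ≤ C * p x * ∫⁻ y, K x y * h y ∂μ := by gcongr
          _ = ∫⁻ y, C * (K x y * p x * h y) ∂μ := by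
              rw [← lintegral_const_mul'' (f := fun y => K x y * h y) _
                ((hKx x).aemeasurable.mul hh)]
              congr 1 with y
              ring
    _ = ∫⁻ y, ∫⁻ x, C * (K x y * p x * h y) ∂μ ∂μ :=
        lintegral_lintegral_swap (((hK.mul (hp.comp measurable_fst)).aemeasurable.mul
          hh.comp_snd).const_mul C)
    _ = ∫⁻ y, C * h y * ∫⁻ x, K x y * p x ∂μ ∂μ := by
        congr 1 with y
        rw [← lintegral_const_mul (f := fun x => K x y * p x) _ ((hKy y).mul hp)]
        congr 1 with x
        ring
    _ ≤ ∫⁻ y, C * h y * (C * p y) ∂μ := lintegral_mono_ae <| by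
        filter_upwards [hcol] with y hy
        gcongr
    _ = C ^ 2 * ∫⁻ y, g y ^ 2 ∂μ := by
        rw [← lintegral_const_mul'' _ (hg.pow_const 2)]
        refine lintegral_congr_ae ?_
        filter_upwards [hp0, hpt] with y hy0 hyt
        rw [show C * h y * (C * p y) = C ^ 2 * g y ^ 2 * ((p y)⁻¹ * p y) by ring,
          ENNReal.inv_mul_cancel hy0 hyt, mul_one]

theorem eLpNorm_two_sq {E : Type*} [NormedAddCommGroup E] (f : α → E) :
    eLpNorm f 2 μ ^ 2 = ∫⁻ x, ‖f x‖ₑ ^ 2 ∂μ := by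
  simpa using eLpNorm_nnreal_pow_eq_lintegral (f := f) (μ := μ) (p := 2) two_ne_zero

theorem memLp_integral_mul_and_eLpNorm_le_of_schur [SFinite μ] {𝕜 : Type*} [RCLike 𝕜]
    {k : α → α → 𝕜} (hk : Measurable (Function.uncurry k)) {f : α → 𝕜} (hf : MemLp f 2 μ)
    {p : α → ℝ≥0∞} (hp : Measurable p) (hp0 : ∀ᵐ y ∂μ, p y ≠ 0) (hpt : ∀ᵐ y ∂μ, p y ≠ ∞)
    {C : ℝ≥0∞} (hC : C ≠ ∞) (hrow : ∀ᵐ x ∂μ, ∫⁻ y, ‖k x y‖ₑ * p y ∂μ ≤ C * p x)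
    (hcol : ∀ᵐ y ∂μ, ∫⁻ x, ‖k x y‖ₑ * p x ∂μ ≤ C * p y) :
    MemLp (fun x => ∫ y, k x y * f y ∂μ) 2 μ ∧
      eLpNorm (fun x => ∫ y, k x y * f y ∂μ) 2 μ ≤ C * eLpNorm f 2 μ := by
  have hmeas : AEStronglyMeasurable (fun x => ∫ y, k x y * f y ∂μ) μ :=
    (hk.aestronglyMeasurable.mul hf.1.comp_snd).integral_prod_right'
  have hpoint : ∀ x, ‖∫ y, k x y * f y ∂μ‖ₑ ≤ ∫⁻ y, ‖k x y‖ₑ * ‖f y‖ₑ ∂μ := fun x => by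
    simpa only [enorm_mul] using enorm_integral_le_lintegral_enorm (fun y => k x y * f y)
  have hbound : eLpNorm (fun x => ∫ y, k x y * f y ∂μ) 2 μ ≤ C * eLpNorm f 2 μ := by
    refine (ENNReal.pow_le_pow_left_iff two_ne_zero).mp ?_
    rw [mul_pow, eLpNorm_two_sq, eLpNorm_two_sq]
    calc ∫⁻ x, ‖∫ y, k x y * f y ∂μ‖ₑ ^ 2 ∂μ
        ≤ ∫⁻ x, (∫⁻ y, ‖k x y‖ₑ * ‖f y‖ₑ ∂μ) ^ 2 ∂μ :=
          lintegral_mono fun x => by gcongr; exact hpoint x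
      _ ≤ C ^ 2 * ∫⁻ y, ‖f y‖ₑ ^ 2 ∂μ :=
          lintegral_sq_lintegral_mul_le_of_schur hk.enorm hp hf.1.enorm hp0 hpt hrow hcol
  exact ⟨⟨hmeas, hbound.trans_lt (ENNReal.mul_lt_top hC.lt_top hf.2)⟩, hbound⟩

end SchurTest

theorem lintegral_rpow_mul_one_sub_rpow_eq_beta {α β : ℝ} (hα : 0 < α) (hβ : 0 < β) :
    ∫⁻ u in Ioo 0 1, ENNReal.ofReal (u ^ (α - 1) * (1 - u) ^ (β - 1)) =
      ENNReal.ofReal (ProbabilityTheory.beta α β) := by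
  have hB := ProbabilityTheory.beta_pos hα hβ
  have h := ProbabilityTheory.lintegral_betaPDF_eq_one hα hβ
  rw [ProbabilityTheory.lintegral_betaPDF] at h
  simp_rw [mul_assoc, ENNReal.ofReal_mul (one_div_pos.mpr hB).le] at h
  rw [lintegral_const_mul' _ _ ENNReal.ofReal_ne_top,
    ← ENNReal.eq_div_iff (by simpa using hB) ENNReal.ofReal_ne_top] at h
  rw [h, one_div, one_div, ENNReal.ofReal_inv_of_pos hB, inv_inv]

theorem beta_one_sub (s : ℝ) : ProbabilityTheory.beta s (1 - s) = π / sin (π * s) := by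
  rw [ProbabilityTheory.beta, add_sub_cancel, Real.Gamma_one, div_one, Gamma_mul_Gamma_one_sub]

theorem lintegral_rpow_div_add {x s : ℝ} (hx : 0 < x) (hs0 : 0 < s) (hs1 : s < 1) :
    ∫⁻ y in Ioi 0, ENNReal.ofReal ((y / x) ^ (s - 1) / (x + y)) =
      ENNReal.ofReal (π / sin (π * s)) := by
  -- The substitution `y = x u / (1 - u)` turns the integral into `B(s, 1 - s)`.
  set φ : ℝ → ℝ := fun u => x * u / (1 - u)
  have himage : φ '' Ioo 0 1 = Ioi 0 := by
    ext y
    constructor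
    · rintro ⟨u, hu, rfl⟩
      exact div_pos (mul_pos hx hu.1) (sub_pos.mpr hu.2)
    · intro (hy : 0 < y)
      refine ⟨y / (x + y), ⟨by positivity, (div_lt_one (by positivity)).mpr (by linarith)⟩, ?_⟩
      have : x + y ≠ 0 := by positivity
      simp only [φ]
      rw [one_sub_div this, add_sub_cancel_right]
      field_simp
  have hderiv : ∀ u ∈ Ioo (0 : ℝ) 1, HasDerivWithinAt φ (x / (1 - u) ^ 2) (Ioo 0 1) u := by
    intro u hu
    have hne : 1 - u ≠ 0 := (sub_pos.mpr hu.2).ne'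
    exact (((hasDerivAt_id u).const_mul x).div ((hasDerivAt_id u).const_sub 1)
      hne).hasDerivWithinAt.congr_deriv (by simp only [id]; field_simp; ring)
  have hinj : InjOn φ (Ioo 0 1) := by
    intro u hu v hv huv
    have := (sub_pos.mpr hu.2).ne'
    have := (sub_pos.mpr hv.2).ne'
    simp only [φ] at huv
    field_simp at huv
    nlinarith [huv]
  rw [← himage, lintegral_image_eq_lintegral_abs_deriv_mul measurableSet_Ioo hderiv hinj,
    ← beta_one_sub, ← lintegral_rpow_mul_one_sub_rpow_eq_beta hs0 (by linarith)]
  refine setLIntegral_congr_fun measurableSet_Ioo fun u hu => ?_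
  have hv : 0 < 1 - u := sub_pos.mpr hu.2
  have hφx : φ u / x = u / (1 - u) := by simp only [φ]; field_simp
  have hxφ : x + φ u = x / (1 - u) := by simp only [φ]; field_simp; ring
  rw [hφx, hxφ, abs_of_pos (by positivity), ← ENNReal.ofReal_mul (by positivity),
    show 1 - s - 1 = -(s - 1) - 1 by ring, rpow_sub hv, rpow_neg hv.le, rpow_one,
    div_rpow hu.1.le hv.le]
  congr 1
  field_simp

noncomputable def rKernel (a x y : ℝ) : ℝ := (y / x) ^ a * (exp (-(x + y) / 2) / (x + y))

theorem measurable_rKernel (a : ℝ) : Measurable (Function.uncurry (rKernel a)) := by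
  unfold rKernel Function.uncurry; fun_prop

section rKernel

variable {a x y : ℝ}

theorem rKernel_nonneg (hx : 0 < x) (hy : 0 < y) : 0 ≤ rKernel a x y := by
  unfold rKernel; positivity

theorem rKernel_le (hx : 0 < x) (hy : 0 < y) : rKernel a x y ≤ (y / x) ^ a / (x + y) := by
  rw [rKernel, div_eq_mul_one_div ((y / x) ^ a)]
  have : 0 < x + y := by linarith
  gcongr
  exact exp_le_one_iff.mpr (by linarith)

theorem rKernel_swap (hx : 0 < x) (hy : 0 < y) : rKernel a y x = rKernel (-a) x y := by
  rw [rKernel, rKernel, rpow_neg (by positivity), ← inv_rpow (by positivity), inv_div, add_comm y x]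

theorem sq_rKernel_le (hx : 0 < x) (hy : 0 < y) :
    rKernel a x y ^ 2 ≤ x ^ (-(2 * a)) / x ^ 2 * (exp (-y) * y ^ (2 * a + 1 - 1)) := by
  have hsq : ((y / x) ^ a) ^ 2 = x ^ (-(2 * a)) * y ^ (2 * a + 1 - 1) := by
    rw [← rpow_natCast, ← rpow_mul (by positivity), div_rpow hy.le hx.le, rpow_neg hx.le]
    ring_nf
  have hexp : exp (-(x + y) / 2) ^ 2 ≤ exp (-y) := by
    rw [← exp_nat_mul]; gcongr; push_cast; linarith
  rw [rKernel, mul_pow, div_pow, hsq]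
  calc x ^ (-(2 * a)) * y ^ (2 * a + 1 - 1) * (exp (-(x + y) / 2) ^ 2 / (x + y) ^ 2)
      ≤ x ^ (-(2 * a)) * y ^ (2 * a + 1 - 1) * (exp (-y) / x ^ 2) := by
        gcongr; linarith
    _ = _ := by ring

theorem memLp_rKernel (ha : -(1 / 2) < a) (hx : 0 < x) :
    MemLp (rKernel a x) 2 (volume.restrict (Ioi 0)) := by
  have hmeas : AEStronglyMeasurable (rKernel a x) (volume.restrict (Ioi 0)) :=
    ((measurable_rKernel a).comp measurable_prodMk_left).aestronglyMeasurable
  refine (memLp_two_iff_integrable_sq hmeas).mpr ?_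
  refine Integrable.mono' ((GammaIntegral_convergent (s := 2 * a + 1) (by linarith)).const_mul
    (x ^ (-(2 * a)) / x ^ 2)) (hmeas.pow 2) ?_
  filter_upwards [ae_restrict_mem measurableSet_Ioi] with y (hy : 0 < y)
  rw [norm_pow, norm_of_nonneg (rKernel_nonneg hx hy)]
  exact sq_rKernel_le hx hy

theorem setLIntegral_enorm_rKernel_mul_rpow_le (ha : |a| < 1 / 2) (hx : 0 < x) :
    ∫⁻ y in Ioi 0, ‖rKernel a x y‖ₑ * ENNReal.ofReal (y ^ (-(1 / 2) : ℝ)) ≤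
      ENNReal.ofReal (π / cos (π * a)) * ENNReal.ofReal (x ^ (-(1 / 2) : ℝ)) := by
  obtain ⟨ha₁, ha₂⟩ := abs_lt.mp ha
  calc ∫⁻ y in Ioi 0, ‖rKernel a x y‖ₑ * ENNReal.ofReal (y ^ (-(1 / 2) : ℝ))
      ≤ ∫⁻ y in Ioi 0, ENNReal.ofReal (x ^ (-(1 / 2) : ℝ)) *
          ENNReal.ofReal ((y / x) ^ (a + 1 / 2 - 1) / (x + y)) := by
        refine setLIntegral_mono' measurableSet_Ioi fun y (hy : 0 < y) => ?_
        have hsplit : (y / x) ^ a * y ^ (-(1 / 2) : ℝ) =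
            x ^ (-(1 / 2) : ℝ) * (y / x) ^ (a + 1 / 2 - 1) := by
          rw [show a + 1 / 2 - 1 = a + -(1 / 2) by ring, rpow_add (by positivity),
            div_rpow hy.le hx.le (-(1 / 2))]
          field_simp
        rw [Real.enorm_of_nonneg (rKernel_nonneg hx hy),
          ← ENNReal.ofReal_mul (rKernel_nonneg hx hy), ← ENNReal.ofReal_mul (by positivity),
          mul_div_assoc', ← hsplit, ← div_mul_eq_mul_div]
        gcongr
        exact rKernel_le hx hy
    _ = ENNReal.ofReal (π / cos (π * a)) * ENNReal.ofReal (x ^ (-(1 / 2) : ℝ)) := by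
        rw [lintegral_const_mul' _ _ ENNReal.ofReal_ne_top,
          lintegral_rpow_div_add hx (by linarith) (by linarith), mul_comm,
          show π * (a + 1 / 2) = π * a + π / 2 by ring, sin_add_pi_div_two]

theorem setLIntegral_enorm_rKernel_mul_rpow_le_left (ha : |a| < 1 / 2) (hy : 0 < y) :
    ∫⁻ x in Ioi 0, ‖rKernel a x y‖ₑ * ENNReal.ofReal (x ^ (-(1 / 2) : ℝ)) ≤
      ENNReal.ofReal (π / cos (π * a)) * ENNReal.ofReal (y ^ (-(1 / 2) : ℝ)) := by
  calc ∫⁻ x in Ioi 0, ‖rKernel a x y‖ₑ * ENNReal.ofReal (x ^ (-(1 / 2) : ℝ))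
      = ∫⁻ x in Ioi 0, ‖rKernel (-a) y x‖ₑ * ENNReal.ofReal (x ^ (-(1 / 2) : ℝ)) :=
        setLIntegral_congr_fun measurableSet_Ioi fun x (hx : 0 < x) => by
          rw [rKernel_swap hy hx]
    _ ≤ _ := by
        simpa only [abs_neg, mul_neg, cos_neg] using
          setLIntegral_enorm_rKernel_mul_rpow_le (a := -a) (by rwa [abs_neg]) hy

end rKernel

/-- For `|a| < 1/2`, the integral operator `R_a` with kernel
`(y/x)^a e^{-(x+y)/2}/(x+y)` is well defined and bounded on `L²(0,∞)` with norm
at most `π/cos(πa)`. -/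
theorem stmt_9 (a : ℝ) (ha : |a| < 1/2) (f : ℝ → ℝ)
    (hf : MemLp f 2 (volume.restrict (Ioi 0))) :
    (∀ x > (0:ℝ),
      IntegrableOn (fun y => (y / x) ^ a * (Real.exp (-(x + y) / 2) / (x + y)) * f y)
        (Ioi 0)) ∧
    MemLp (fun x => ∫ y in Ioi (0:ℝ),
        (y / x) ^ a * (Real.exp (-(x + y) / 2) / (x + y)) * f y) 2
      (volume.restrict (Ioi 0)) ∧
    eLpNorm (fun x => ∫ y in Ioi (0:ℝ),
        (y / x) ^ a * (Real.exp (-(x + y) / 2) / (x + y)) * f y) 2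
      (volume.restrict (Ioi 0)) ≤
      ENNReal.ofReal (Real.pi / Real.cos (Real.pi * a)) *
        eLpNorm f 2 (volume.restrict (Ioi 0)) := by
  have hpos : ∀ᵐ y ∂(volume.restrict (Ioi 0)), (0 : ℝ) < y := ae_restrict_mem measurableSet_Ioi
  obtain ⟨hmem, hle⟩ := memLp_integral_mul_and_eLpNorm_le_of_schur (measurable_rKernel a) hf
    (p := fun y => ENNReal.ofReal (y ^ (-(1 / 2) : ℝ))) (by fun_prop)
    (hpos.mono fun y hy => (ENNReal.ofReal_pos.mpr (rpow_pos_of_pos hy _)).ne')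
    (ae_of_all _ fun _ => ENNReal.ofReal_ne_top) ENNReal.ofReal_ne_top
    (hpos.mono fun _ hx => setLIntegral_enorm_rKernel_mul_rpow_le ha hx)
    (hpos.mono fun _ hy => setLIntegral_enorm_rKernel_mul_rpow_le_left ha hy)
  exact ⟨fun x hx => (memLp_rKernel (abs_lt.mp ha).1 hx).integrable_mul hf, hmem, hle⟩
end

section
/- Let a be real with |a| < 1/2 and set G(x) = ∫_0^∞ y^{−2a} e^{−y}/(x+y) dy for x > 0. Then for all x, z > 0 with x ≠ z, the composition of the kernels (x/y)^a e^{−(x+y)/2}/(x+y) and (z/y)^a e^{−(y+z)/2}/(y+z) satisfies ∫_0^∞ (x/y)^a · e^{−(x+y)/2}/(x+y) · (z/y)^a · e^{−(y+z)/2}/(y+z) dy = (xz)^a e^{−(x+z)/2} (G(x) − G(z))/(z − x); equivalently, this composed kernel equals the Whittaker kernel Γ(1−2a) ( W_{a+1/2,a}(x) W_{a−1/2,a}(z) − W_{a−1/2,a}(x) W_{a+1/2,a}(z) ) / ( (x−z) √(xz) ), where W_{a+1/2,a}(x) = x^{a+1/2} e^{−x/2} and W_{a−1/2,a}(x) = x^{a+1/2}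 e^{−x/2} ∫_0^∞ e^{−tx}(1+t)^{2a−1} dt. -/
open MeasureTheory Set Real

/-!
The partial fraction `1 / ((x + y) (y + z)) = (1 / (x + y) - 1 / (z + y)) / (z - x)` splits the
composed kernel into `(x z)^a e^{-(x+z)/2} (G x - G z) / (z - x)`. Writing
`1 / (x + y) = ∫₀^∞ e^{-(x+y) t} dt` and exchanging the order of integration turns `G x` into
`Γ(1 - 2a) ∫₀^∞ e^{-t x} (1 + t)^{2a-1} dt = Γ(1 - 2a) x^{-a-1/2} e^{x/2} W_{a-1/2,a}(x)`,
which gives the Whittaker form.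
-/

lemma integral_exp_neg_mul_Ioi_zero {c : ℝ} (hc : 0 < c) :
    ∫ t in Ioi (0:ℝ), exp (-c * t) = 1 / c := by
  rw [integral_exp_mul_Ioi (neg_lt_zero.mpr hc), mul_zero, exp_zero, neg_div_neg_eq]

section Stieltjes

variable {s x : ℝ}

lemma integrableOn_rpow_mul_exp_neg_div_add (hs : 0 < s) (hx : 0 < x) :
    IntegrableOn (fun y : ℝ => y ^ (s - 1) * exp (-y) / (x + y)) (Ioi 0) := by
  refine ((GammaIntegral_convergent hs).mul_const x⁻¹).mono'
    (by fun_prop : Measurable _).aestronglyMeasurable ?_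
  filter_upwards [ae_restrict_mem measurableSet_Ioi] with y (hy : 0 < y)
  rw [norm_of_nonneg (by positivity), mul_comm (exp (-y)), ← div_eq_mul_inv]
  gcongr
  linarith

lemma integrable_rpow_mul_exp_neg_mul_exp_neg_add_mul (hs : 0 < s) (hx : 0 < x) :
    Integrable (fun p : ℝ × ℝ => p.1 ^ (s - 1) * exp (-p.1) * exp (-(x + p.1) * p.2))
      ((volume.restrict (Ioi 0)).prod (volume.restrict (Ioi 0))) := by
  refine (integrable_prod_iff (by fun_prop)).mpr ⟨?_, ?_⟩
  · filter_upwards [ae_restrict_mem measurableSet_Ioi] with y (hy : 0 < y)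
    exact (exp_neg_integrableOn_Ioi 0 (by positivity : 0 < x + y)).const_mul _
  · refine (integrableOn_rpow_mul_exp_neg_div_add hs hx).congr ?_
    filter_upwards [ae_restrict_mem measurableSet_Ioi] with y (hy : 0 < y)
    simp only [norm_mul, norm_of_nonneg (rpow_nonneg hy.le _), norm_of_nonneg (exp_pos _).le]
    rw [integral_const_mul, integral_exp_neg_mul_Ioi_zero (by positivity), mul_one_div]

lemma integral_rpow_mul_exp_neg_div_add (hs : 0 < s) (hx : 0 < x) :
    ∫ y in Ioi (0:ℝ), y ^ (s - 1) * exp (-y) / (x + y)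
      = Gamma s * ∫ t in Ioi (0:ℝ), exp (-t * x) * (1 + t) ^ (-s) := by
  have integral_t : ∀ y ∈ Ioi (0:ℝ),
      ∫ t in Ioi (0:ℝ), y ^ (s - 1) * exp (-y) * exp (-(x + y) * t)
        = y ^ (s - 1) * exp (-y) / (x + y) := fun y (hy : 0 < y) => by
    rw [integral_const_mul, integral_exp_neg_mul_Ioi_zero (by positivity), mul_one_div]
  have integral_y : ∀ t ∈ Ioi (0:ℝ),
      ∫ y in Ioi (0:ℝ), y ^ (s - 1) * exp (-y) * exp (-(x + y) * t)
        = exp (-t * x) * (1 + t) ^ (-s) * Gamma s := fun t (ht : 0 < t) => by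
    have ht1 : 0 < 1 + t := by linarith
    have hexp : ∀ y, exp (-y) * exp (-(x + y) * t) = exp (-t * x) * exp (-((1 + t) * y)) :=
      fun y => by rw [← exp_add, ← exp_add]; ring_nf
    simp_rw [mul_assoc, hexp, mul_left_comm _ (exp (-t * x))]
    rw [integral_const_mul, integral_rpow_mul_exp_neg_mul_Ioi hs ht1, one_div,
      inv_rpow ht1.le, ← rpow_neg ht1.le]
  rw [← setIntegral_congr_fun measurableSet_Ioi integral_t,
    integral_integral_swap (integrable_rpow_mul_exp_neg_mul_exp_neg_add_mul hs hx),
    setIntegral_congr_fun measurableSet_Ioi integral_y, integral_mul_const, mul_comm]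

end Stieltjes

section KernelComposition

variable {a x z : ℝ}

lemma kernel_mul_kernel_eq (hx : 0 < x) (hz : 0 < z) (hxz : x ≠ z) {y : ℝ} (hy : 0 < y) :
    (x / y) ^ a * (exp (-(x + y) / 2) / (x + y)) * ((z / y) ^ a * (exp (-(y + z) / 2) / (y + z)))
      = (x * z) ^ a * exp (-(x + z) / 2) / (z - x) *
          (y ^ (-2 * a) * exp (-y) / (x + y) - y ^ (-2 * a) * exp (-y) / (z + y)) := by
  have hexp : exp (-((x + y) / 2)) * exp (-((y + z) / 2)) = exp (-((x + z) / 2)) * exp (-y) := by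
    rw [← exp_add, ← exp_add]; ring_nf
  rw [div_rpow hx.le hy.le, div_rpow hz.le hy.le, mul_rpow hx.le hz.le,
    show -2 * a = -(a + a) by ring, rpow_neg hy.le, rpow_add hy]
  field_simp
  linear_combination (z - x) * (z + y) * hexp

lemma integral_kernel_mul_kernel (ha : a < 1 / 2) (hx : 0 < x) (hz : 0 < z) (hxz : x ≠ z) :
    ∫ y in Ioi (0:ℝ),
        (x / y) ^ a * (exp (-(x + y) / 2) / (x + y)) *
          ((z / y) ^ a * (exp (-(y + z) / 2) / (y + z)))
      = (x * z) ^ a * exp (-(x + z) / 2) / (z - x) *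
          ((∫ y in Ioi (0:ℝ), y ^ (-2 * a) * exp (-y) / (x + y))
            - ∫ y in Ioi (0:ℝ), y ^ (-2 * a) * exp (-y) / (z + y)) := by
  have hs : 0 < 1 - 2 * a := by linarith
  have hint : ∀ w, 0 < w →
      IntegrableOn (fun y : ℝ => y ^ (-2 * a) * exp (-y) / (w + y)) (Ioi 0) := fun w hw => by
    simpa only [show 1 - 2 * a - 1 = -2 * a by ring]
      using integrableOn_rpow_mul_exp_neg_div_add hs hw
  rw [setIntegral_congr_fun measurableSet_Ioi fun y hy => kernel_mul_kernel_eq hx hz hxz hy,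
    integral_const_mul, integral_sub (hint x hx) (hint z hz)]

end KernelComposition

/-- Composition of the kernels of `R_a` and `R_{-a}`: it equals the Whittaker kernel
with parameters `κ = a ± 1/2`, `μ = a`. -/
theorem stmt_11 (a : ℝ) (ha : |a| < 1/2)
    (G : ℝ → ℝ) (hG : ∀ x > (0:ℝ), G x = ∫ y in Ioi (0:ℝ), y ^ (-2 * a) * Real.exp (-y) / (x + y))
    (x z : ℝ) (hx : 0 < x) (hz : 0 < z) (hxz : x ≠ z) :
    (∫ y in Ioi (0:ℝ),
        (x / y) ^ a * (Real.exp (-(x + y) / 2) / (x + y)) *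
          ((z / y) ^ a * (Real.exp (-(y + z) / 2) / (y + z)))) =
        (x * z) ^ a * Real.exp (-(x + z) / 2) * (G x - G z) / (z - x) ∧
    (∫ y in Ioi (0:ℝ),
        (x / y) ^ a * (Real.exp (-(x + y) / 2) / (x + y)) *
          ((z / y) ^ a * (Real.exp (-(y + z) / 2) / (y + z)))) =
        Real.Gamma (1 - 2 * a) *
          ((x ^ (a + 1/2) * Real.exp (-x / 2)) *
              (z ^ (a + 1/2) * Real.exp (-z / 2) *
                ∫ t in Ioi (0:ℝ), Real.exp (-t * z) * (1 + t) ^ (2 * a - 1)) -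
            (x ^ (a + 1/2) * Real.exp (-x / 2) *
                ∫ t in Ioi (0:ℝ), Real.exp (-t * x) * (1 + t) ^ (2 * a - 1)) *
              (z ^ (a + 1/2) * Real.exp (-z / 2))) /
          ((x - z) * Real.sqrt (x * z)) := by
  have ha' : a < 1 / 2 := (abs_lt.mp ha).2
  have hG_laplace : ∀ w > (0:ℝ),
      G w = Gamma (1 - 2 * a) * ∫ t in Ioi (0:ℝ), exp (-t * w) * (1 + t) ^ (2 * a - 1) := by
    intro w hw
    have h := integral_rpow_mul_exp_neg_div_add (by linarith : 0 < 1 - 2 * a) hw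
    rwa [show 1 - 2 * a - 1 = -2 * a by ring, show -(1 - 2 * a) = 2 * a - 1 by ring,
      ← hG w hw] at h
  have hcomp : (∫ y in Ioi (0:ℝ),
        (x / y) ^ a * (exp (-(x + y) / 2) / (x + y)) *
          ((z / y) ^ a * (exp (-(y + z) / 2) / (y + z)))) =
        (x * z) ^ a * exp (-(x + z) / 2) * (G x - G z) / (z - x) := by
    rw [integral_kernel_mul_kernel ha' hx hz hxz, ← hG x hx, ← hG z hz]
    ring
  refine ⟨hcomp, ?_⟩
  rw [hcomp, hG_laplace x hx, hG_laplace z hz, rpow_add hx, rpow_add hz, ← sqrt_eq_rpow,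
    ← sqrt_eq_rpow, sqrt_mul hx.le, mul_rpow hx.le hz.le,
    show -(x + z) / 2 = -x / 2 + -z / 2 by ring, exp_add]
  field_simp
  ring
end

section
/- Let κ, μ be real with μ > κ − 1/2, let ε ≥ 0, and suppose either ε > 0 or μ < 1/2. Then the kernel Ξ(s,t) = e^{−εs − st} (s + 1/2)^{(κ+μ−1/2)/2} (s − 1/2)^{(μ−κ−1/2)/2} is square integrable on (1/2,∞) × (0,∞): ∫_{1/2}^∞ ∫_0^∞ |Ξ(s,t)|² dt ds = ∫_{1/2}^∞ e^{−2εs} (s + 1/2)^{κ+μ−1/2} (s − 1/2)^{μ−κ−1/2} (2s)^{−1} ds < ∞. -/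
/-!
Squaring the kernel gives `Ξ(s,t)² = w(s) e^{-2st}` with
`w(s) = e^{-2εs} (s+1/2)^{κ+μ-1/2} (s-1/2)^{μ-κ-1/2}`, so the inner integral is `w(s)/(2s)` and,
by Tonelli, square integrability reduces to the integrability of `w(s)/(2s)` on `(1/2, ∞)`.
Near `1/2` this is the integrability of `(s-1/2)^{μ-κ-1/2}`, i.e. `μ > κ - 1/2`; at infinity
`w(s)/(2s)` is comparable to `e^{-2εs} s^{2μ-2}`, integrable when `ε > 0` or `μ < 1/2`.
-/

open MeasureTheory Set Real

lemma rpow_le_two_rpow_abs_mul_rpow {x y : ℝ} (c : ℝ) (hy : 0 < y) (h1 : y / 2 ≤ x)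
    (h2 : x ≤ 2 * y) : x ^ c ≤ 2 ^ |c| * y ^ c := by
  rcases le_or_gt 0 c with hc | hc
  · rw [abs_of_nonneg hc, ← mul_rpow zero_le_two hy.le]
    exact rpow_le_rpow (by linarith) h2 hc
  · rw [abs_of_neg hc, rpow_neg zero_le_two, ← inv_rpow zero_le_two,
      ← mul_rpow (by norm_num) hy.le, inv_mul_eq_div]
    exact rpow_le_rpow_of_nonpos (by positivity) h1 hc.le

lemma integral_mul_exp_neg_mul_Ioi (w : ℝ) {r : ℝ} (hr : 0 < r) :
    ∫ t in Ioi (0 : ℝ), w * exp (-r * t) = w / r := by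
  rw [integral_const_mul, integral_exp_mul_Ioi (neg_neg_of_pos hr), mul_zero, exp_zero,
    neg_div_neg_eq, mul_one_div]

lemma integrableOn_Ioc_sub_rpow {b : ℝ} (hb : -1 < b) (c d : ℝ) :
    IntegrableOn (fun x : ℝ => (x - c) ^ b) (Ioc c d) := by
  have h := (intervalIntegral.intervalIntegrable_rpow' hb (a := 0) (b := d - c)).comp_sub_right c
  rw [zero_add, sub_add_cancel, intervalIntegrable_iff] at h
  exact h.mono_set Ioc_subset_uIoc

lemma integrableOn_exp_neg_mul_mul_rpow_Ioi_one {c q : ℝ} (hc : 0 ≤ c) (h : 0 < c ∨ q < -1) :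
    IntegrableOn (fun s : ℝ => exp (-c * s) * s ^ q) (Ioi 1) := by
  have hmeas :
      AEStronglyMeasurable (fun s : ℝ => exp (-c * s) * s ^ q) (volume.restrict (Ioi 1)) :=
    (by fun_prop : Measurable fun s : ℝ => exp (-c * s) * s ^ q).aestronglyMeasurable
  rcases h with hc' | hq
  · have base := integrableOn_rpow_mul_exp_neg_mul_rpow (p := 1) (s := |q|)
      (by linarith [abs_nonneg q]) one_pos hc'
    refine Integrable.mono' (base.mono_set (Ioi_subset_Ioi zero_le_one)) hmeas ?_
    filter_upwards [ae_restrict_mem measurableSet_Ioi] with s (hs : 1 < s)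
    rw [Real.norm_eq_abs, abs_of_nonneg (by positivity), rpow_one, mul_comm]
    exact mul_le_mul_of_nonneg_right (rpow_le_rpow_of_exponent_le hs.le (le_abs_self q))
      (exp_pos _).le
  · refine Integrable.mono' (integrableOn_Ioi_rpow_of_lt hq one_pos) hmeas ?_
    filter_upwards [ae_restrict_mem measurableSet_Ioi] with s (hs : 1 < s)
    rw [Real.norm_eq_abs, abs_of_nonneg (by positivity)]
    exact mul_le_of_le_one_left (by positivity) (exp_le_one_iff.mpr (by nlinarith))

lemma integrable_prod_of_eq_mul_exp_neg_mul {μ : Measure ℝ} [SFinite μ] {S : Set ℝ}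
    (hS : MeasurableSet S) {F : ℝ → ℝ → ℝ} {w r : ℝ → ℝ}
    (hF_meas : AEStronglyMeasurable (fun p : ℝ × ℝ => F p.1 p.2)
      ((μ.restrict S).prod (volume.restrict (Ioi 0))))
    (hr : ∀ s ∈ S, 0 < r s) (hF : ∀ s ∈ S, ∀ t, F s t = w s * exp (-r s * t))
    (hw : IntegrableOn (fun s => w s / r s) S μ) :
    Integrable (fun p : ℝ × ℝ => F p.1 p.2) ((μ.restrict S).prod (volume.restrict (Ioi 0))) := by
  rw [integrable_prod_iff hF_meas]
  constructor
  · filter_upwards [ae_restrict_mem hS] with s hs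
    simp only [hF s hs]
    exact (exp_neg_integrableOn_Ioi 0 (hr s hs)).const_mul _
  · refine hw.norm.congr ?_
    filter_upwards [ae_restrict_mem hS] with s hs
    simp only [hF s hs, norm_mul, Real.norm_eq_abs, abs_exp]
    rw [integral_mul_exp_neg_mul_Ioi _ (hr s hs), abs_div, abs_of_pos (hr s hs)]

/-- `Ξ(s, t)² = kernelSqWeight ε a b s * exp (-2 s t)` with `a = κ + μ - 1/2`, `b = μ - κ - 1/2`. -/
noncomputable def kernelSqWeight (ε a b s : ℝ) : ℝ :=
  exp (-2 * ε * s) * (s + 1/2) ^ a * (s - 1/2) ^ b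

section kernelSqWeight

variable {ε a b : ℝ}

lemma sq_exp_mul_rpow_mul_rpow {s : ℝ} (hs : 1/2 < s) (t : ℝ) :
    (exp (-ε * s - s * t) * (s + 1/2) ^ (a / 2) * (s - 1/2) ^ (b / 2)) ^ 2 =
      kernelSqWeight ε a b s * exp (-(2 * s) * t) := by
  have hsq {x : ℝ} (hx : 0 < x) (c : ℝ) : (x ^ (c / 2)) ^ 2 = x ^ c := by
    rw [← rpow_natCast, ← rpow_mul hx.le]; norm_num
  rw [kernelSqWeight, mul_pow, mul_pow, hsq (by linarith) a, hsq (by linarith) b, ← exp_nat_mul,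
    show ((2 : ℕ) : ℝ) * (-ε * s - s * t) = -2 * ε * s + -(2 * s) * t by push_cast; ring, exp_add]
  ring

lemma measurable_kernelSqWeight : Measurable (kernelSqWeight ε a b) := by
  unfold kernelSqWeight; fun_prop

lemma integrableOn_kernelSqWeight_div_Ioc (hε : 0 ≤ ε) (hb : -1 < b) :
    IntegrableOn (fun s => kernelSqWeight ε a b s / (2 * s)) (Ioc (1/2) 1) := by
  refine Integrable.mono' ((integrableOn_Ioc_sub_rpow hb _ _).const_mul (2 ^ |a|))
    (measurable_kernelSqWeight.div (by fun_prop)).aestronglyMeasurable ?_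
  filter_upwards [ae_restrict_mem measurableSet_Ioc] with s ⟨hs1, hs2⟩
  have hsm : 0 < s - 1/2 := by linarith
  have hA : (s + 1/2) ^ a ≤ 2 ^ |a| := by
    simpa using rpow_le_two_rpow_abs_mul_rpow a one_pos (x := s + 1/2) (by linarith) (by linarith)
  have hE : exp (-2 * ε * s) ≤ 1 := exp_le_one_iff.mpr (by nlinarith)
  rw [Real.norm_eq_abs, kernelSqWeight, abs_of_nonneg (by positivity)]
  calc exp (-2 * ε * s) * (s + 1/2) ^ a * (s - 1/2) ^ b / (2 * s)
      ≤ 1 * 2 ^ |a| * (s - 1/2) ^ b / 1 := by gcongr; linarith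
    _ = 2 ^ |a| * (s - 1/2) ^ b := by ring

lemma integrableOn_kernelSqWeight_div_Ioi_one (hε : 0 ≤ ε) (h : 0 < ε ∨ a + b < 0) :
    IntegrableOn (fun s => kernelSqWeight ε a b s / (2 * s)) (Ioi 1) := by
  have hdecay : IntegrableOn (fun s : ℝ => exp (-(2 * ε) * s) * s ^ (a + b - 1)) (Ioi 1) :=
    integrableOn_exp_neg_mul_mul_rpow_Ioi_one (by positivity)
      (h.imp (fun _ => by positivity) (fun _ => by linarith))
  have hbase := hdecay.const_mul (2 ^ |a| * 2 ^ |b| / 2)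
  refine Integrable.mono' hbase
    (measurable_kernelSqWeight.div (by fun_prop)).aestronglyMeasurable ?_
  filter_upwards [ae_restrict_mem measurableSet_Ioi] with s (hs : 1 < s)
  have hs0 : 0 < s := by linarith
  have hA := rpow_le_two_rpow_abs_mul_rpow a hs0 (x := s + 1/2) (by linarith) (by linarith)
  have hB := rpow_le_two_rpow_abs_mul_rpow b hs0 (x := s - 1/2) (by linarith) (by linarith)
  have hsm : 0 < s - 1/2 := by linarith
  rw [Real.norm_eq_abs, kernelSqWeight, abs_of_nonneg (by positivity)]
  calc exp (-2 * ε * s) * (s + 1/2) ^ a * (s - 1/2) ^ b / (2 * s)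
      ≤ exp (-2 * ε * s) * (2 ^ |a| * s ^ a) * (2 ^ |b| * s ^ b) / (2 * s) := by
        gcongr
    _ = 2 ^ |a| * 2 ^ |b| / 2 * (exp (-(2 * ε) * s) * s ^ (a + b - 1)) := by
        rw [rpow_sub hs0, rpow_add hs0, rpow_one]; ring_nf

lemma integrableOn_kernelSqWeight_div (hε : 0 ≤ ε) (hb : -1 < b) (h : 0 < ε ∨ a + b < 0) :
    IntegrableOn (fun s => kernelSqWeight ε a b s / (2 * s)) (Ioi (1/2)) := by
  rw [← Ioc_union_Ioi_eq_Ioi (by norm_num : (1/2 : ℝ) ≤ 1)]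
  exact (integrableOn_kernelSqWeight_div_Ioc hε hb).union
    (integrableOn_kernelSqWeight_div_Ioi_one hε h)

end kernelSqWeight

/-- The kernel `Ξ(s,t) = e^{-εs - st} (s+1/2)^{(κ+μ-1/2)/2} (s-1/2)^{(μ-κ-1/2)/2}` is
square integrable on `(1/2,∞) × (0,∞)`, with
`∫∫ Ξ² dt ds = ∫ e^{-2εs} (s+1/2)^{κ+μ-1/2} (s-1/2)^{μ-κ-1/2} (2s)⁻¹ ds < ∞`. -/
theorem stmt_17 (κ μ : ℝ) (h : μ > κ - 1/2) (ε : ℝ) (hε : 0 ≤ ε)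
    (hcase : 0 < ε ∨ μ < 1/2)
    (Ξ : ℝ → ℝ → ℝ)
    (hΞ : ∀ s t : ℝ, Ξ s t =
      Real.exp (-ε * s - s * t) * (s + 1/2) ^ ((κ + μ - 1/2) / 2) *
        (s - 1/2) ^ ((μ - κ - 1/2) / 2)) :
    (∀ s ∈ Ioi (1/2 : ℝ),
      (∫ t in Ioi (0:ℝ), (Ξ s t) ^ 2) =
        Real.exp (-2 * ε * s) * (s + 1/2) ^ (κ + μ - 1/2) * (s - 1/2) ^ (μ - κ - 1/2) /
          (2 * s)) ∧
    IntegrableOn (fun s =>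
        Real.exp (-2 * ε * s) * (s + 1/2) ^ (κ + μ - 1/2) * (s - 1/2) ^ (μ - κ - 1/2) /
          (2 * s)) (Ioi (1/2 : ℝ)) ∧
    Integrable (fun p : ℝ × ℝ => (Ξ p.1 p.2) ^ 2)
      ((volume.restrict (Ioi (1/2 : ℝ))).prod (volume.restrict (Ioi (0:ℝ)))) := by
  have hΞsq : ∀ s ∈ Ioi (1/2 : ℝ), ∀ t, Ξ s t ^ 2 =
      kernelSqWeight ε (κ + μ - 1/2) (μ - κ - 1/2) s * exp (-(2 * s) * t) := fun s hs t => by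
    rw [hΞ]; exact sq_exp_mul_rpow_mul_rpow hs t
  have hpos : ∀ s ∈ Ioi (1/2 : ℝ), 0 < 2 * s := fun s (hs : 1/2 < s) => by linarith
  have hint : IntegrableOn (fun s => kernelSqWeight ε (κ + μ - 1/2) (μ - κ - 1/2) s / (2 * s))
      (Ioi (1/2)) :=
    integrableOn_kernelSqWeight_div hε (by linarith) (hcase.imp_right fun _ => by linarith)
  refine ⟨fun s hs => ?_, hint, ?_⟩
  · rw [setIntegral_congr_fun measurableSet_Ioi fun t _ => hΞsq s hs t,
      integral_mul_exp_neg_mul_Ioi _ (hpos s hs), kernelSqWeight]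
  · obtain rfl : Ξ = _ := funext fun s => funext (hΞ s)
    exact integrable_prod_of_eq_mul_exp_neg_mul measurableSet_Ioi
      (by fun_prop : Measurable _).aestronglyMeasurable hpos hΞsq hint
end
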